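/- Let m ≥ 1 be an integer, let z be a complex number with Re z ∈ (-m, 0), and let λ be a nonzero complex number with Re λ ≥ 0. Then ∫₀^∞ s^{z-1} (e^{-λ s} - 1)^m ds = λ^{-z} · ∫₀^∞ s^{z-1} (e^{-s} - 1)^m ds, where λ^{-z} is the principal complex power. -/

import Mathlib

/-!
For real `λ = t > 0` the identity is the substitution `s ↦ t s` in the Mellin transform. Both
sides are holomorphic in `λ` on the open right half-plane (differentiate under the integral sign;
there `e^(-λs)` supplies the decay), so they agree on it by the identity theorem. Both sides are
continuous on the closed half-plane minus the origin: the left one by dominated convergence with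
`|e^(-λs) - 1| ≤ min 2 (|λ| s)`, the right one because `λ ^ (-z)` is continuous off the
nonpositive reals. Hence they agree there too.
-/

open MeasureTheory Set Complex Filter Topology

theorem Complex.norm_exp_sub_one_le_norm_of_re_nonpos {w : ℂ} (hw : w.re ≤ 0) :
    ‖exp w - 1‖ ≤ ‖w‖ := by
  have hderiv : ∀ t ∈ Icc (0 : ℝ) 1,
      HasDerivWithinAt (fun t : ℝ => exp (t * w)) (exp (t * w) * w) (Icc 0 1) t := fun t _ => by
    simpa using ((ofRealCLM.hasDerivAt (x := t)).mul_const w).cexp.hasDerivWithinAt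
  have hbound : ∀ t ∈ Icc (0 : ℝ) 1, ‖exp (t * w) * w‖ ≤ ‖w‖ := fun t ht => by
    rw [norm_mul, norm_exp, re_ofReal_mul]
    exact mul_le_of_le_one_left (norm_nonneg _)
      (Real.exp_le_one_iff.2 (mul_nonpos_of_nonneg_of_nonpos ht.1 hw))
  simpa using (convex_Icc (0 : ℝ) 1).norm_image_sub_le_of_norm_hasDerivWithin_le hderiv hbound
    (left_mem_Icc.2 zero_le_one) (right_mem_Icc.2 zero_le_one)

theorem Complex.norm_exp_sub_one_le_two_of_re_nonpos {w : ℂ} (hw : w.re ≤ 0) :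
    ‖exp w - 1‖ ≤ 2 := by
  calc ‖exp w - 1‖ ≤ ‖exp w‖ + ‖(1 : ℂ)‖ := norm_sub_le _ _
    _ ≤ 1 + 1 := by
      rw [norm_exp, norm_one]
      gcongr
      exact Real.exp_le_one_iff.2 hw
    _ = 2 := one_add_one_eq_two

theorem norm_cexp_neg_mul_sub_one_le {l : ℂ} (hl : 0 ≤ l.re) {s : ℝ} (hs : 0 ≤ s) :
    ‖cexp (-l * s) - 1‖ ≤ min 2 (‖l‖ * s) := by
  have hre : (-l * s).re ≤ 0 := by
    rw [mul_comm, re_ofReal_mul, neg_re]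
    exact mul_nonpos_of_nonneg_of_nonpos hs (neg_nonpos.2 hl)
  refine le_min (norm_exp_sub_one_le_two_of_re_nonpos hre) ?_
  calc ‖cexp (-l * s) - 1‖ ≤ ‖-l * s‖ := norm_exp_sub_one_le_norm_of_re_nonpos hre
    _ = ‖l‖ * s := by rw [norm_mul, norm_neg, norm_real, Real.norm_of_nonneg hs]

theorem integrableOn_Ioi_of_le_rpow {E : Type*} [NormedAddCommGroup E] {f : ℝ → E}
    (hf : AEStronglyMeasurable f (volume.restrict (Ioi 0)))
    {C₁ C₂ a b : ℝ} (ha : -1 < a) (hb : b < -1)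
    (h₁ : ∀ s ∈ Ioc (0 : ℝ) 1, ‖f s‖ ≤ C₁ * s ^ a)
    (h₂ : ∀ s ∈ Ioi (1 : ℝ), ‖f s‖ ≤ C₂ * s ^ b) :
    IntegrableOn f (Ioi 0) := by
  rw [← Ioc_union_Ioi_eq_Ioi zero_le_one]
  refine IntegrableOn.union ?_ ?_
  · have hint : IntegrableOn (fun s : ℝ => C₁ * s ^ a) (Ioc 0 1) := by
      have := intervalIntegral.intervalIntegrable_rpow' (a := 0) (b := 1) ha
      exact ((intervalIntegrable_iff_integrableOn_Ioc_of_le zero_le_one).1 this).const_mul C₁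
    exact hint.mono' (hf.mono_measure (Measure.restrict_mono Ioc_subset_Ioi_self le_rfl))
      ((ae_restrict_iff' measurableSet_Ioc).2 (ae_of_all _ h₁))
  · exact ((integrableOn_Ioi_rpow_of_lt hb zero_lt_one).const_mul C₂).mono'
      (hf.mono_measure (Measure.restrict_mono (Ioi_subset_Ioi zero_le_one) le_rfl))
      ((ae_restrict_iff' measurableSet_Ioi).2 (ae_of_all _ h₂))

theorem integrableOn_rpow_mul_min_pow {m : ℕ} {a c C : ℝ} (ha : -(m : ℝ) < a) (ha' : a < 0)
    (hc : 0 ≤ c) (hC : 0 ≤ C) :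
    IntegrableOn (fun s : ℝ => s ^ (a - 1) * min c (C * s) ^ m) (Ioi 0) := by
  refine integrableOn_Ioi_of_le_rpow (C₁ := C ^ m) (C₂ := c ^ m) (a := a - 1 + m) (b := a - 1)
    ?_ (by linarith) (by linarith) ?_ ?_
  · refine ContinuousOn.aestronglyMeasurable (fun s hs => ?_) measurableSet_Ioi
    exact ((Real.continuousAt_rpow_const s _ (Or.inl hs.ne')).mul
      ((continuous_const.min (continuous_const.mul continuous_id)).pow m).continuousAt)
      |>.continuousWithinAt
  · rintro s ⟨hs, -⟩
    have hmin : 0 ≤ min c (C * s) := le_min hc (by positivity)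
    rw [Real.norm_of_nonneg (by positivity), mul_comm (C ^ m), Real.rpow_add hs,
      Real.rpow_natCast, mul_assoc, ← mul_pow, mul_comm s]
    gcongr
    exact min_le_right _ _
  · intro s hs
    have hs0 : 0 < s := zero_lt_one.trans hs
    have hmin : 0 ≤ min c (C * s) := le_min hc (by positivity)
    rw [Real.norm_of_nonneg (by positivity), mul_comm (c ^ m)]
    gcongr
    exact min_le_left _ _

variable {m : ℕ} {z : ℂ}

noncomputable def expSubOnePowMellin (m : ℕ) (z l : ℂ) : ℂ :=
  mellin (fun s : ℝ => (cexp (-l * s) - 1) ^ m) z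

theorem expSubOnePowMellin_ofReal (m : ℕ) (z : ℂ) {t : ℝ} (ht : 0 < t) :
    expSubOnePowMellin m z t = (t : ℂ) ^ (-z) * expSubOnePowMellin m z 1 := by
  have := mellin_comp_mul_left (fun s : ℝ => (cexp (-1 * s) - 1) ^ m) z ht
  simp only [ofReal_mul, ← mul_assoc, neg_mul] at this
  simpa [expSubOnePowMellin] using this

theorem continuousOn_cpow_mul_cexp_sub_one_pow (l : ℂ) :
    ContinuousOn (fun s : ℝ => (s : ℂ) ^ (z - 1) * (cexp (-l * s) - 1) ^ m) (Ioi 0) :=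
  fun s hs => ((continuousAt_ofReal_cpow_const s _ (Or.inr hs.ne')).mul
    (((continuous_const.mul continuous_ofReal).cexp.sub continuous_const).pow m).continuousAt)
    |>.continuousWithinAt

theorem norm_cpow_mul_cexp_sub_one_pow_le {l : ℂ} (hl : 0 ≤ l.re) {R : ℝ} (hlR : ‖l‖ ≤ R)
    {s : ℝ} (hs : 0 < s) :
    ‖(s : ℂ) ^ (z - 1) * (cexp (-l * s) - 1) ^ m‖ ≤ s ^ (z.re - 1) * min 2 (R * s) ^ m := by
  rw [norm_mul, norm_pow, norm_cpow_eq_rpow_re_of_pos hs, sub_re, one_re]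
  gcongr
  exact (norm_cexp_neg_mul_sub_one_le hl hs.le).trans (by gcongr)

theorem integrableOn_cpow_mul_cexp_sub_one_pow (hz : -(m : ℝ) < z.re) (hz' : z.re < 0)
    {l : ℂ} (hl : 0 ≤ l.re) :
    IntegrableOn (fun s : ℝ => (s : ℂ) ^ (z - 1) * (cexp (-l * s) - 1) ^ m) (Ioi 0) :=
  (integrableOn_rpow_mul_min_pow hz hz' zero_le_two (norm_nonneg l)).mono'
    ((continuousOn_cpow_mul_cexp_sub_one_pow l).aestronglyMeasurable measurableSet_Ioi)
    ((ae_restrict_iff' measurableSet_Ioi).2 (ae_of_all _ fun _ hs =>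
      norm_cpow_mul_cexp_sub_one_pow_le hl le_rfl hs))

theorem continuousOn_expSubOnePowMellin (hz : -(m : ℝ) < z.re) (hz' : z.re < 0) :
    ContinuousOn (expSubOnePowMellin m z) {l | 0 ≤ l.re} := by
  intro l₀ _
  have hnear : ∀ᶠ l in 𝓝[{l | 0 ≤ l.re}] l₀, 0 ≤ l.re ∧ ‖l‖ ≤ ‖l₀‖ + 1 := by
    filter_upwards [self_mem_nhdsWithin,
      nhdsWithin_le_nhds (Metric.ball_mem_nhds l₀ zero_lt_one)] with l hl hball
    refine ⟨hl, ?_⟩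
    have := norm_le_norm_add_norm_sub' l l₀
    rw [Metric.mem_ball, dist_eq_norm] at hball
    linarith
  refine continuousWithinAt_of_dominated
    (Eventually.of_forall fun l =>
      (continuousOn_cpow_mul_cexp_sub_one_pow l).aestronglyMeasurable measurableSet_Ioi)
    (hnear.mono fun l hl => (ae_restrict_iff' measurableSet_Ioi).2 (ae_of_all _ fun _ hs =>
      norm_cpow_mul_cexp_sub_one_pow_le hl.1 hl.2 hs))
    (integrableOn_rpow_mul_min_pow hz hz' zero_le_two (by positivity)) (ae_of_all _ fun s => ?_)
  exact (continuous_const.mul (((continuous_id.neg.mul continuous_const).cexp.sub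
    continuous_const).pow m)).continuousWithinAt

theorem norm_deriv_cpow_mul_cexp_sub_one_pow_le {l : ℂ} {ε R : ℝ} (hε : 0 ≤ ε) (hεl : ε ≤ l.re)
    (hlR : ‖l‖ ≤ R) {s : ℝ} (hs : 0 < s) :
    ‖(s : ℂ) ^ (z - 1) * (m * (cexp (-l * s) - 1) ^ (m - 1) * (cexp (-l * s) * -s))‖
      ≤ m * R ^ (m - 1) * (s ^ (z.re + (m - 1 : ℕ)) * Real.exp (-ε * s)) := by
  have hre : (-l * s).re = -l.re * s := by rw [mul_comm, re_ofReal_mul, neg_re, mul_comm]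
  have hR : 0 ≤ R := (norm_nonneg l).trans hlR
  have hsub : ‖cexp (-l * s) - 1‖ ≤ R * s :=
    ((norm_cexp_neg_mul_sub_one_le (hε.trans hεl) hs.le).trans (min_le_right _ _)).trans
      (by gcongr)
  rw [norm_mul, norm_mul, norm_mul, norm_mul, norm_pow, norm_cpow_eq_rpow_re_of_pos hs, sub_re,
    one_re, norm_natCast, norm_exp, hre, norm_neg, norm_real, Real.norm_of_nonneg hs.le]
  calc s ^ (z.re - 1) * (m * ‖cexp (-l * s) - 1‖ ^ (m - 1) * (Real.exp (-l.re * s) * s))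
      ≤ s ^ (z.re - 1) * (m * (R * s) ^ (m - 1) * (Real.exp (-ε * s) * s)) := by
        gcongr
    _ = m * R ^ (m - 1) * (s ^ (z.re + (m - 1 : ℕ)) * Real.exp (-ε * s)) := by
        rw [Real.rpow_add hs, Real.rpow_sub_one hs.ne', Real.rpow_natCast, mul_pow]
        field_simp

theorem differentiableAt_expSubOnePowMellin (hz : -(m : ℝ) < z.re) (hz' : z.re < 0) {l₀ : ℂ}
    (hl₀ : 0 < l₀.re) : DifferentiableAt ℂ (expSubOnePowMellin m z) l₀ := by
  set ε := l₀.re / 2 with hε_def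
  have hε : 0 < ε := half_pos hl₀
  have hball : ∀ l ∈ Metric.ball l₀ ε, ε ≤ l.re ∧ ‖l‖ ≤ ‖l₀‖ + ε := fun l hl => by
    rw [Metric.mem_ball, dist_eq_norm] at hl
    have hre := (abs_le.1 ((abs_re_le_norm (l - l₀)).trans hl.le)).1
    have := norm_le_norm_add_norm_sub' l l₀
    rw [sub_re] at hre
    constructor <;> linarith
  have hexponent : -1 < z.re + ((m - 1 : ℕ) : ℝ) := by
    have : (m : ℝ) - 1 ≤ ((m - 1 : ℕ) : ℝ) := by rcases m with _ | m <;> simp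
    linarith
  have hbound_int : IntegrableOn (fun s : ℝ => m * (‖l₀‖ + ε) ^ (m - 1) *
      (s ^ (z.re + (m - 1 : ℕ)) * Real.exp (-ε * s))) (Ioi 0) := by
    have := integrableOn_rpow_mul_exp_neg_mul_rpow hexponent zero_lt_one hε
    simp only [Real.rpow_one] at this
    exact this.const_mul _
  have key := hasDerivAt_integral_of_dominated_loc_of_deriv_le (μ := volume.restrict (Ioi 0))
    (F := fun (l : ℂ) (s : ℝ) => (s : ℂ) ^ (z - 1) * (cexp (-l * s) - 1) ^ m)
    (F' := fun l s =>
      (s : ℂ) ^ (z - 1) * (m * (cexp (-l * s) - 1) ^ (m - 1) * (cexp (-l * s) * -s)))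
    (Metric.ball_mem_nhds l₀ hε)
    (Eventually.of_forall fun l =>
      (continuousOn_cpow_mul_cexp_sub_one_pow l).aestronglyMeasurable measurableSet_Ioi)
    (integrableOn_cpow_mul_cexp_sub_one_pow hz hz' hl₀.le) ?_
    ((ae_restrict_iff' measurableSet_Ioi).2 (ae_of_all _ fun s hs l hl =>
      norm_deriv_cpow_mul_cexp_sub_one_pow_le hε.le (hball l hl).1 (hball l hl).2 hs))
    hbound_int (ae_of_all _ fun s l _ => ?_)
  · exact key.2.differentiableAt
  · refine ContinuousOn.aestronglyMeasurable (fun s hs => ?_) measurableSet_Ioi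
    have hexp : Continuous fun s : ℝ => cexp (-l₀ * s) :=
      (continuous_const.mul continuous_ofReal).cexp
    exact ((continuousAt_ofReal_cpow_const s _ (Or.inr (ne_of_gt hs))).mul
      ((continuous_const.mul ((hexp.sub continuous_const).pow (m - 1))).mul
        (hexp.mul continuous_ofReal.neg)).continuousAt).continuousWithinAt
  · have hlin : HasDerivAt (fun l : ℂ => -l * s) (-s) l := by
      simpa using (hasDerivAt_id l).neg.mul_const (s : ℂ)
    exact ((hlin.cexp.sub_const 1).pow m).const_mul _

theorem eqOn_expSubOnePowMellin_of_re_pos (hz : -(m : ℝ) < z.re) (hz' : z.re < 0) :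
    EqOn (expSubOnePowMellin m z) (fun l => l ^ (-z) * expSubOnePowMellin m z 1)
      {l | 0 < l.re} := by
  have hU : IsOpen {l : ℂ | 0 < l.re} := isOpen_lt continuous_const continuous_re
  have hF : AnalyticOnNhd ℂ (expSubOnePowMellin m z) {l | 0 < l.re} :=
    DifferentiableOn.analyticOnNhd
      (fun l hl => (differentiableAt_expSubOnePowMellin hz hz' hl).differentiableWithinAt) hU
  have hG : AnalyticOnNhd ℂ (fun l => l ^ (-z) * expSubOnePowMellin m z 1) {l | 0 < l.re} :=
    DifferentiableOn.analyticOnNhd (fun l hl => ((differentiableAt_id.cpow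
      (differentiableAt_const _) (Or.inl hl)).mul_const _).differentiableWithinAt) hU
  have hreal : Tendsto ((↑) : ℝ → ℂ) (𝓝[>] 1) (𝓝[≠] 1) := by
    refine tendsto_nhdsWithin_iff.2 ⟨?_, eventually_nhdsWithin_of_forall fun t ht => ?_⟩
    · simpa using (continuous_ofReal.tendsto 1).mono_left nhdsWithin_le_nhds
    · simpa using ht.ne'
  refine hF.eqOn_of_preconnected_of_frequently_eq hG (convex_halfSpace_re_gt 0).isPreconnected
    (z₀ := 1) (by simp) (hreal.frequently (Eventually.frequently ?_))
  exact eventually_nhdsWithin_of_forall fun t ht =>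
    expSubOnePowMellin_ofReal m z (zero_lt_one.trans ht)

theorem expSubOnePowMellin_eq_cpow_mul (hz : -(m : ℝ) < z.re) (hz' : z.re < 0) {l : ℂ}
    (hl : 0 ≤ l.re) (hl0 : l ≠ 0) :
    expSubOnePowMellin m z l = l ^ (-z) * expSubOnePowMellin m z 1 := by
  have hslit : l ∈ slitPlane := by
    refine mem_slitPlane_iff.2 (hl.lt_or_eq.imp id fun hre him => hl0 ?_)
    exact Complex.ext hre.symm him
  refine (eqOn_expSubOnePowMellin_of_re_pos hz hz').of_subset_closure
    ((continuousOn_expSubOnePowMellin hz hz').mono inter_subset_left)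
    (fun l hl => ((continuousAt_cpow_const hl.2).mul continuousAt_const).continuousWithinAt)
    (fun l (hl : 0 < l.re) => ⟨hl.le, Or.inl hl⟩)
    (inter_subset_left.trans (closure_setOfPred_lt_re 0).ge)
    (⟨hl, hslit⟩ : l ∈ {l : ℂ | 0 ≤ l.re} ∩ slitPlane)

theorem stmt_2 (m : ℕ) (z : ℂ) (hzre : -(m : ℝ) < z.re) (hzre' : z.re < 0)
    (lam : ℂ) (hlam : lam ≠ 0) (hlamre : 0 ≤ lam.re) :
    ∫ s in Ioi (0 : ℝ), (s : ℂ) ^ (z - 1) * (Complex.exp (-lam * (s : ℂ)) - 1) ^ m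
      = lam ^ (-z) *
          ∫ s in Ioi (0 : ℝ), (s : ℂ) ^ (z - 1) * (Complex.exp (-(s : ℂ)) - 1) ^ m := by
  simpa [expSubOnePowMellin, mellin] using expSubOnePowMellin_eq_cpow_mul hzre hzre' hlamre hlam
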